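/- Let ε ∈ (0,1) and δ ∈ (0,1), and consider the same Markov chain as above but additionally requiring at least one initial transition from an unbalanced start state U₀, which with probability δ terminates immediately and with probability 1-δ enters state C. Let X be the total number of balanced steps. Then P(X ≤ n) = 1 - (1-δ)(ε/(ε+δ-εδ))^{n+1} for all n ≥ 0. -/

import Mathlib

open MeasureTheory ProbabilityTheory
open scoped ENNReal

private lemma fin3_eq_one {x : Fin 3} (h0 : x ≠ 0) (h2 : x ≠ 2) : x = 1 := by
  fin_cases x <;> simp_all

/-- Same chain as before but with an initial transition from the unbalanced start state
`U₀`: with probability `δ` the process terminates immediately (so `X = 0`, encoded by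
`init ω = false`) and with probability `1-δ` (encoded `init ω = true`) it enters state
`C`, after which each visit to `C` is independently balanced (`0`) w.p. `ε`,
unbalanced-continue (`1`) w.p. `(1-ε)(1-δ)`, or unbalanced-stop (`2`) w.p. `(1-ε)δ`;
`X` counts the balanced steps. Then `P(X ≤ n) = 1 - (1-δ)(ε/(ε+δ-εδ))^{n+1}`. -/
theorem stmt17 {Ω : Type*} [MeasurableSpace Ω] (μ : Measure Ω) [IsProbabilityMeasure μ]
    (ε δ : ℝ) (hε : 0 < ε) (hε1 : ε < 1) (hδ : 0 < δ) (hδ1 : δ < 1)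
    (init : Ω → Bool) (hinitmeas : Measurable init)
    (hinit : μ {ω | init ω = true} = ENNReal.ofReal (1 - δ))
    (step : ℕ → Ω → Fin 3) (hmeas : ∀ i, Measurable (step i))
    (hindep : iIndepFun step μ)
    (hindep' : IndepFun init (fun ω => fun i => step i ω) μ)
    (h0 : ∀ i, μ {ω | step i ω = 0} = ENNReal.ofReal ε)
    (h1 : ∀ i, μ {ω | step i ω = 1} = ENNReal.ofReal ((1 - ε) * (1 - δ)))
    (h2 : ∀ i, μ {ω | step i ω = 2} = ENNReal.ofReal ((1 - ε) * δ))
    (X : Ω → ℕ)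
    (hX : ∀ ω, X ω =
      if init ω then
        ((Finset.range (sInf {i | step i ω = 2})).filter fun i => step i ω = 0).card
      else 0) :
    ∀ n : ℕ,
      μ {ω | X ω ≤ n}
        = ENNReal.ofReal (1 - (1 - δ) * (ε / (ε + δ - ε * δ)) ^ (n + 1)) := by
  intro n
  have hε0 : (0:ℝ) ≤ ε := hε.le
  have hq0 : (0:ℝ) ≤ (1 - ε) * (1 - δ) := by nlinarith
  have hq1 : (1 - ε) * (1 - δ) < 1 := by nlinarith
  have hD : (0:ℝ) < ε + δ - ε * δ := by nlinarith
  have hDle : ε ≤ ε + δ - ε * δ := by nlinarith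
  have hr0 : (0:ℝ) ≤ ε / (ε + δ - ε * δ) := by positivity
  have hr1 : ε / (ε + δ - ε * δ) ≤ 1 := by rw [div_le_one hD]; exact hDle
  have hrp1 : (ε / (ε + δ - ε * δ)) ^ (n + 1) ≤ 1 := pow_le_one₀ hr0 hr1
  have hrp0 : (0:ℝ) ≤ (ε / (ε + δ - ε * δ)) ^ (n + 1) := by positivity
  -- main objects
  set Y : Ω → ℕ := fun ω =>
    ((Finset.range (sInf {i | step i ω = 2})).filter fun i => step i ω = 0).card with hY_def
  set cval : ℕ → Finset ℕ → ℕ → Fin 3 :=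
    fun m S i => if i ∈ insert m S then 0 else 1 with hc_def
  set E : ℕ → Finset ℕ → Set Ω := fun m S =>
    ⋂ i ∈ Finset.range (m + 1), step i ⁻¹' {cval m S i} with hE_def
  set pc : ℕ → Finset (Finset ℕ) := fun m => Finset.powersetCard n (Finset.range m) with hpc_def
  set U : Set Ω := ⋃ m, ⋃ S ∈ pc m, E m S with hU_def
  set N : Set Ω := ⋂ j, step j ⁻¹' {2}ᶜ with hN_def
  -- membership in E
  have hmemE : ∀ m S (ω : Ω), ω ∈ E m S ↔ ∀ i ≤ m, step i ω = cval m S i := by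
    intro m S ω
    simp only [hE_def, Set.mem_iInter, Set.mem_preimage, Set.mem_singleton_iff,
      Finset.mem_range, Nat.lt_succ_iff]
  have hzero : ∀ m S, ∀ ω ∈ E m S, ∀ i ≤ m, (step i ω = 0 ↔ i ∈ insert m S) := by
    intro m S ω hω i hi
    have h := (hmemE m S ω).1 hω i hi
    by_cases hmem : i ∈ insert m S
    · simp only [hc_def, if_pos hmem] at h
      simp [h, hmem]
    · simp only [hc_def, if_neg hmem] at h
      simp only [h, hmem, iff_false]
      decide
  -- disjointness across distinct m
  have hkey : ∀ m S, S ∈ pc m → ∀ m' S', S' ∈ pc m' → m < m' →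
      ∀ ω, ω ∈ E m S → ω ∈ E m' S' → False := by
    intro m S hS m' S' hS' hlt ω hω hω'
    obtain ⟨hSsub, hScard⟩ := Finset.mem_powersetCard.1 hS
    obtain ⟨hSsub', hScard'⟩ := Finset.mem_powersetCard.1 hS'
    have hmS : m ∉ S := fun h => absurd (Finset.mem_range.1 (hSsub h)) (lt_irrefl m)
    have hsub : insert m S ⊆ S' := by
      intro i hi
      have him : i ≤ m := by
        rcases Finset.mem_insert.1 hi with h | h
        · omega
        · exact (Finset.mem_range.1 (hSsub h)).le
      have h0i : step i ω = 0 := (hzero m S ω hω i him).2 hi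
      have h' := (hzero m' S' ω hω' i (by omega)).1 h0i
      rcases Finset.mem_insert.1 h' with h | h
      · omega
      · exact h
    have hc1 : (insert m S).card = n + 1 := by
      rw [Finset.card_insert_of_notMem hmS, hScard]
    have := Finset.card_le_card hsub
    omega
  -- common subset lemma for same m
  have hsub_aux : ∀ m S S', S ∈ pc m → S' ∈ pc m → ∀ ω, ω ∈ E m S → ω ∈ E m S' → S ⊆ S' := by
    intro m S S' hS hS' ω hω hω' i hi
    have hilt : i < m := Finset.mem_range.1 ((Finset.mem_powersetCard.1 hS).1 hi)
    have h0i : step i ω = 0 := (hzero m S ω hω i hilt.le).2 (Finset.mem_insert_of_mem hi)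
    rcases Finset.mem_insert.1 ((hzero m S' ω hω' i hilt.le).1 h0i) with h | h
    · omega
    · exact h
  -- measurability of E
  have hEmeas : ∀ m S, MeasurableSet (E m S) := by
    intro m S
    exact MeasurableSet.biInter (Set.to_countable _)
      fun i _ => (hmeas i) (measurableSet_singleton _)
  -- probability of E m S
  have hprobE : ∀ m S, S ∈ pc m →
      μ (E m S) = ENNReal.ofReal ε ^ (n + 1) * ENNReal.ofReal ((1 - ε) * (1 - δ)) ^ (m - n) := by
    intro m S hS
    obtain ⟨hSsub, hScard⟩ := Finset.mem_powersetCard.1 hS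
    have hmS : m ∉ S := fun h => absurd (Finset.mem_range.1 (hSsub h)) (lt_irrefl m)
    have hnm : n ≤ m := by
      have := Finset.card_le_card hSsub
      rw [hScard, Finset.card_range] at this
      exact this
    have hins_sub : insert m S ⊆ Finset.range (m + 1) := by
      intro i hi
      rcases Finset.mem_insert.1 hi with h | h
      · simp [h]
      · exact Finset.mem_range.2 (by have := Finset.mem_range.1 (hSsub h); omega)
    have hmul := hindep.meas_biInter (S := Finset.range (m + 1))
      (s := fun i => step i ⁻¹' {cval m S i})
      (fun i _ => ⟨{cval m S i}, measurableSet_singleton _, rfl⟩)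
    rw [hE_def]
    rw [hmul]
    have hterm : ∀ i ∈ Finset.range (m + 1), μ (step i ⁻¹' {cval m S i}) =
        if i ∈ insert m S then ENNReal.ofReal ε else ENNReal.ofReal ((1 - ε) * (1 - δ)) := by
      intro i _
      by_cases hmem : i ∈ insert m S
      · rw [if_pos hmem]
        have : step i ⁻¹' {cval m S i} = {ω | step i ω = 0} := by
          simp only [hc_def, if_pos hmem]; rfl
        rw [this, h0 i]
      · rw [if_neg hmem]
        have : step i ⁻¹' {cval m S i} = {ω | step i ω = 1} := by
          simp only [hc_def, if_neg hmem]; rfl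
        rw [this, h1 i]
    rw [Finset.prod_congr rfl hterm, Finset.prod_ite, Finset.prod_const, Finset.prod_const]
    have hfilter : (Finset.range (m + 1)).filter (· ∈ insert m S) = insert m S := by
      rw [Finset.filter_mem_eq_inter]
      exact Finset.inter_eq_right.2 hins_sub
    have hcard1 : ((Finset.range (m + 1)).filter (· ∈ insert m S)).card = n + 1 := by
      rw [hfilter, Finset.card_insert_of_notMem hmS, hScard]
    have hcard2 : ((Finset.range (m + 1)).filter (fun i => i ∉ insert m S)).card = m - n := by
      rw [Finset.filter_not, hfilter, Finset.card_sdiff_of_subset hins_sub, Finset.card_range,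
        Finset.card_insert_of_notMem hmS, hScard]
      omega
    rw [hcard1, hcard2]
  -- measure of U
  have hμU : μ U = ∑' m : ℕ, (Nat.choose m n : ℝ≥0∞) *
      (ENNReal.ofReal ε ^ (n + 1) * ENNReal.ofReal ((1 - ε) * (1 - δ)) ^ (m - n)) := by
    rw [hU_def, measure_iUnion ?_ ?_]
    · refine tsum_congr fun m => ?_
      rw [measure_biUnion_finset ?_ (fun S _ => hEmeas m S)]
      · rw [Finset.sum_congr rfl (fun S hS => hprobE m S hS), Finset.sum_const,
          hpc_def]
        simp only [Finset.card_powersetCard, Finset.card_range, nsmul_eq_mul]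
      · intro S hS S' hS' hne
        rw [Function.onFun, Set.disjoint_left]
        intro ω hω hω'
        exact hne (Finset.Subset.antisymm (hsub_aux m S S' hS hS' ω hω hω')
          (hsub_aux m S' S hS' hS ω hω' hω))
    · intro m m' hne
      rw [Function.onFun, Set.disjoint_left]
      intro ω hω hω'
      simp only [Set.mem_iUnion, exists_prop] at hω hω'
      obtain ⟨S, hS, hωS⟩ := hω
      obtain ⟨S', hS', hωS'⟩ := hω'
      rcases lt_or_gt_of_ne hne with h | h
      · exact hkey m S hS m' S' hS' h ω hωS hωS'
      · exact hkey m' S' hS' m S hS h ω hωS' hωS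
    · intro m
      exact (pc m).measurableSet_biUnion fun S _ => hEmeas m S
  -- series evaluation
  have hser : (∑' m : ℕ, (Nat.choose m n : ℝ≥0∞) *
      (ENNReal.ofReal ε ^ (n + 1) * ENNReal.ofReal ((1 - ε) * (1 - δ)) ^ (m - n)))
      = ENNReal.ofReal ((ε / (ε + δ - ε * δ)) ^ (n + 1)) := by
    have hinj : Function.Injective (fun j : ℕ => j + n) := add_left_injective n
    rw [← hinj.tsum_eq ?_]
    · have hql : ‖(1 - ε) * (1 - δ)‖ < 1 := by
        rw [Real.norm_eq_abs, abs_of_nonneg hq0]; exact hq1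
      have hsummable : Summable
          (fun j : ℕ => (((j + n).choose n : ℝ) * ((1 - ε) * (1 - δ)) ^ j) * ε ^ (n + 1)) :=
        (summable_choose_mul_geometric_of_norm_lt_one n hql).mul_right _
      have hterm : ∀ j : ℕ, ((Nat.choose (j + n) n : ℝ≥0∞) *
          (ENNReal.ofReal ε ^ (n + 1) * ENNReal.ofReal ((1 - ε) * (1 - δ)) ^ (j + n - n)))
          = ENNReal.ofReal ((((j + n).choose n : ℝ) * ((1 - ε) * (1 - δ)) ^ j) * ε ^ (n + 1)) := by
        intro j
        have hj : j + n - n = j := by omega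
        rw [hj, ← ENNReal.ofReal_natCast ((j + n).choose n), ← ENNReal.ofReal_pow hε0,
          ← ENNReal.ofReal_pow hq0, ← ENNReal.ofReal_mul (by positivity),
          ← ENNReal.ofReal_mul (by positivity)]
        congr 1
        ring
      calc (∑' j : ℕ, (Nat.choose (j + n) n : ℝ≥0∞) *
            (ENNReal.ofReal ε ^ (n + 1) * ENNReal.ofReal ((1 - ε) * (1 - δ)) ^ (j + n - n)))
          = ∑' j : ℕ, ENNReal.ofReal
              ((((j + n).choose n : ℝ) * ((1 - ε) * (1 - δ)) ^ j) * ε ^ (n + 1)) :=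
            tsum_congr hterm
        _ = ENNReal.ofReal (∑' j : ℕ,
              (((j + n).choose n : ℝ) * ((1 - ε) * (1 - δ)) ^ j) * ε ^ (n + 1)) :=
            (ENNReal.ofReal_tsum_of_nonneg (fun j => by positivity) hsummable).symm
        _ = ENNReal.ofReal ((ε / (ε + δ - ε * δ)) ^ (n + 1)) := by
            rw [tsum_mul_right, tsum_choose_mul_geometric_of_norm_lt_one n hql]
            congr 1
            rw [div_pow]
            have h1q : 1 - (1 - ε) * (1 - δ) = ε + δ - ε * δ := by ring
            rw [h1q]
            field_simp
    · intro x hx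
      rcases lt_or_ge x n with hxn | hxn
      · simp [Function.mem_support, Nat.choose_eq_zero_of_lt hxn] at hx
      · exact ⟨x - n, Nat.sub_add_cancel hxn⟩
  -- identification of the event {n+1 ≤ Y} with U \ N
  have hYU : {ω | n + 1 ≤ Y ω} = U \ N := by
    ext ω
    constructor
    · intro hY
      simp only [Set.mem_setOf_eq, hY_def] at hY
      have hne : {i | step i ω = 2}.Nonempty := by
        by_contra h
        rw [Set.not_nonempty_iff_eq_empty] at h
        rw [h, Nat.sInf_empty] at hY
        simp at hY
      have ht2 : step (sInf {i | step i ω = 2}) ω = 2 := Nat.sInf_mem hne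
      have htlt : ∀ i, i < sInf {i | step i ω = 2} → step i ω ≠ 2 :=
        fun i hi => Nat.notMem_of_lt_sInf hi
      set t := sInf {i | step i ω = 2} with ht_def
      have hct : n + 1 ≤ ((Finset.range t).filter fun i => step i ω = 0).card := hY
      have ht0 : t ≠ 0 := by
        intro h
        rw [h] at hct
        simp at hct
      have hMne : (t - 1) ∈
          {j | n + 1 ≤ ((Finset.range (j + 1)).filter fun i => step i ω = 0).card} := by
        have : t - 1 + 1 = t := by omega
        simpa [this] using hct
      set m := sInf {j | n + 1 ≤ ((Finset.range (j + 1)).filter fun i => step i ω = 0).card}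
        with hm_def
      have hm1 : n + 1 ≤ ((Finset.range (m + 1)).filter fun i => step i ω = 0).card :=
        Nat.sInf_mem ⟨_, hMne⟩
      have hmt : m < t := lt_of_le_of_lt (Nat.sInf_le hMne) (by omega)
      have hcm : ((Finset.range m).filter fun i => step i ω = 0).card ≤ n := by
        rcases Nat.eq_zero_or_pos m with h | h
        · simp [h]
        · have h2' : (m - 1) ∉
              {j | n + 1 ≤ ((Finset.range (j + 1)).filter fun i => step i ω = 0).card} :=
            Nat.notMem_of_lt_sInf (by omega)
          have hmm : m - 1 + 1 = m := by omega
          rw [Set.mem_setOf_eq, hmm] at h2'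
          omega
      have hsplit : ((Finset.range (m + 1)).filter fun i => step i ω = 0) =
          if step m ω = 0 then insert m ((Finset.range m).filter fun i => step i ω = 0)
          else (Finset.range m).filter fun i => step i ω = 0 := by
        rw [Finset.range_add_one, Finset.filter_insert]
      have hm0 : step m ω = 0 := by
        by_contra h
        rw [hsplit, if_neg h] at hm1
        omega
      have hScard : ((Finset.range m).filter fun i => step i ω = 0).card = n := by
        rw [hsplit, if_pos hm0, Finset.card_insert_of_notMem (by simp)] at hm1
        omega
      constructor
      · have hSpc : ((Finset.range m).filter fun i => step i ω = 0) ∈ pc m :=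
          Finset.mem_powersetCard.2 ⟨Finset.filter_subset _ _, hScard⟩
        have hωE : ω ∈ E m ((Finset.range m).filter fun i => step i ω = 0) := by
          rw [hmemE]
          intro i hi
          by_cases hmem : i ∈ insert m ((Finset.range m).filter fun i => step i ω = 0)
          · simp only [hc_def, if_pos hmem]
            rcases Finset.mem_insert.1 hmem with h | h
            · rw [h]; exact hm0
            · exact (Finset.mem_filter.1 h).2
          · simp only [hc_def, if_neg hmem]
            have hilt : i < m := by
              rcases lt_or_eq_of_le hi with h | h
              · exact h
              · exact absurd (h ▸ Finset.mem_insert_self _ _) hmem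
            refine fin3_eq_one ?_ ?_
            · intro h
              exact hmem (Finset.mem_insert_of_mem
                (Finset.mem_filter.2 ⟨Finset.mem_range.2 hilt, h⟩))
            · exact htlt i (hilt.trans hmt)
        exact Set.mem_iUnion.2 ⟨m, Set.mem_biUnion hSpc hωE⟩
      · intro hN
        rw [hN_def] at hN
        exact (Set.mem_iInter.1 hN t) ht2
    · rintro ⟨hU', hNot⟩
      simp only [hU_def, Set.mem_iUnion, exists_prop] at hU'
      obtain ⟨m, S, hS, hωE⟩ := hU'
      have h2ex : ∃ j, step j ω = 2 := by
        by_contra h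
        push_neg at h
        exact hNot (Set.mem_iInter.2 fun j => h j)
      obtain ⟨j, hj⟩ := h2ex
      have hne : {i | step i ω = 2}.Nonempty := ⟨j, hj⟩
      have ht2 : step (sInf {i | step i ω = 2}) ω = 2 := Nat.sInf_mem hne
      set t := sInf {i | step i ω = 2} with ht_def
      obtain ⟨hSsub, hScard⟩ := Finset.mem_powersetCard.1 hS
      have hmS : m ∉ S := fun h => absurd (Finset.mem_range.1 (hSsub h)) (lt_irrefl m)
      have hmt : m < t := by
        by_contra h
        push_neg at h
        have h' := (hmemE m S ω).1 hωE t h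
        simp only [hc_def] at h'
        split at h' <;> rw [ht2] at h' <;> exact absurd h' (by decide)
      have hsub : insert m S ⊆ (Finset.range t).filter fun i => step i ω = 0 := by
        intro i hi
        have him : i ≤ m := by
          rcases Finset.mem_insert.1 hi with h | h
          · omega
          · exact (Finset.mem_range.1 (hSsub h)).le
        exact Finset.mem_filter.2 ⟨Finset.mem_range.2 (by omega),
          (hzero m S ω hωE i him).2 hi⟩
      have hc1 : (insert m S).card = n + 1 := by
        rw [Finset.card_insert_of_notMem hmS, hScard]
      have := Finset.card_le_card hsub
      simp only [Set.mem_setOf_eq, hY_def]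
      rw [← ht_def]
      omega
  -- μ N = 0
  have hNmeas : MeasurableSet N :=
    MeasurableSet.iInter fun j => (hmeas j) (measurableSet_singleton _).compl
  have hb0 : (0:ℝ) ≤ 1 - (1 - ε) * δ := by nlinarith
  have hb1 : 1 - (1 - ε) * δ < 1 := by nlinarith
  have hμN : μ N = 0 := by
    have hbound : ∀ k, μ N ≤ ENNReal.ofReal ((1 - (1 - ε) * δ) ^ k) := by
      intro k
      have hsub : N ⊆ ⋂ i ∈ Finset.range k, step i ⁻¹' {2}ᶜ := by
        intro ω hω
        exact Set.mem_iInter₂.2 fun i _ => Set.mem_iInter.1 hω i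
      refine (measure_mono hsub).trans ?_
      rw [hindep.meas_biInter (S := Finset.range k) (s := fun i => step i ⁻¹' {2}ᶜ)
        (fun i _ => ⟨{2}ᶜ, (measurableSet_singleton _).compl, rfl⟩)]
      have hterm : ∀ i ∈ Finset.range k,
          μ (step i ⁻¹' {2}ᶜ) = ENNReal.ofReal (1 - (1 - ε) * δ) := by
        intro i _
        have h2' : μ (step i ⁻¹' {2}) = ENNReal.ofReal ((1 - ε) * δ) := h2 i
        rw [Set.preimage_compl,
          measure_compl ((hmeas i) (measurableSet_singleton _)) (measure_ne_top μ _),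
          h2', measure_univ, ← ENNReal.ofReal_one,
          ← ENNReal.ofReal_sub _ (by nlinarith : (0:ℝ) ≤ (1 - ε) * δ)]
      rw [Finset.prod_congr rfl hterm, Finset.prod_const, Finset.card_range,
        ← ENNReal.ofReal_pow hb0]
    have htend : Filter.Tendsto (fun k => ENNReal.ofReal ((1 - (1 - ε) * δ) ^ k))
        Filter.atTop (nhds 0) := by
      rw [← ENNReal.ofReal_zero]
      exact (ENNReal.continuous_ofReal.tendsto _).comp
        (tendsto_pow_atTop_nhds_zero_of_lt_one hb0 hb1)
    exact le_antisymm (ge_of_tendsto' htend hbound) zero_le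
  -- measurability and measure of U \ N
  have hUmeas : MeasurableSet U := by
    rw [hU_def]
    exact MeasurableSet.iUnion fun m => (pc m).measurableSet_biUnion fun S _ => hEmeas m S
  have hVmeas : MeasurableSet (U \ N) := hUmeas.diff hNmeas
  have hμdiff : μ (U \ N) = μ U := by
    have h1' : μ (U ∩ N) = 0 :=
      le_antisymm ((measure_mono Set.inter_subset_right).trans hμN.le) zero_le
    have h2' : μ (U ∩ N) + μ (U \ N) = μ U := measure_inter_add_diff U hNmeas
    rw [h1', zero_add] at h2'
    exact h2'
  have hμY : μ {ω | n + 1 ≤ Y ω} = ENNReal.ofReal ((ε / (ε + δ - ε * δ)) ^ (n + 1)) := by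
    rw [hYU, hμdiff, hμU, hser]
  -- the event in sequence space, for independence
  set BU : Set (ℕ → Fin 3) := ⋃ m, ⋃ S ∈ pc m,
    ⋂ i ∈ Finset.range (m + 1), (fun f : ℕ → Fin 3 => f i) ⁻¹' {cval m S i} with hBU_def
  set BN : Set (ℕ → Fin 3) := ⋂ j, (fun f : ℕ → Fin 3 => f j) ⁻¹' {2}ᶜ with hBN_def
  have hBmeas : MeasurableSet (BU \ BN) := by
    refine MeasurableSet.diff ?_ ?_
    · exact MeasurableSet.iUnion fun m => (pc m).measurableSet_biUnion fun S _ =>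
        MeasurableSet.biInter (Set.to_countable _)
          fun i _ => (measurable_pi_apply i) (measurableSet_singleton _)
    · exact MeasurableSet.iInter fun j =>
        (measurable_pi_apply j) (measurableSet_singleton _).compl
  have hpre : (fun ω => fun i => step i ω) ⁻¹' (BU \ BN) = U \ N := by
    ext ω
    simp only [hBU_def, hBN_def, hU_def, hN_def, hE_def, Set.mem_preimage, Set.mem_diff,
      Set.mem_iUnion, Set.mem_iInter, Set.mem_preimage, Set.mem_singleton_iff,
      Set.mem_compl_iff, exists_prop]
  -- independence application
  have hinit_ms : MeasurableSet {ω | init ω = true} :=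
    hinitmeas (measurableSet_singleton true)
  have hindY : μ ({ω | init ω = true} ∩ {ω | n + 1 ≤ Y ω}ᶜ)
      = ENNReal.ofReal (1 - δ) *
        ENNReal.ofReal (1 - (ε / (ε + δ - ε * δ)) ^ (n + 1)) := by
    have he1 : {ω | init ω = true} = init ⁻¹' {true} := rfl
    have he2 : {ω | n + 1 ≤ Y ω}ᶜ = (fun ω => fun i => step i ω) ⁻¹' (BU \ BN)ᶜ := by
      rw [hYU, ← hpre, Set.preimage_compl]
    rw [he1, he2, hindep'.measure_inter_preimage_eq_mul _ _
      (measurableSet_singleton true) hBmeas.compl]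
    rw [← he1, hinit]
    congr 1
    rw [Set.preimage_compl, hpre,
      measure_compl hVmeas (measure_ne_top μ _), measure_univ, hμdiff, hμU, hser,
      ← ENNReal.ofReal_one, ← ENNReal.ofReal_sub _ hrp0]
  -- final assembly
  have hXset : {ω | X ω ≤ n} =
      {ω | init ω = true}ᶜ ∪ ({ω | init ω = true} ∩ {ω | n + 1 ≤ Y ω}ᶜ) := by
    ext ω
    simp only [Set.mem_setOf_eq, Set.mem_union, Set.mem_compl_iff, Set.mem_inter_iff, hX ω]
    cases hb : init ω <;> (simp [hb, hY_def]; try omega)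
  rw [hXset, measure_union ?_ ?_]
  · have hcomp : μ {ω | init ω = true}ᶜ = ENNReal.ofReal δ := by
      rw [measure_compl hinit_ms (measure_ne_top μ _), measure_univ, hinit,
        ← ENNReal.ofReal_one, ← ENNReal.ofReal_sub _ (by linarith)]
      norm_num
    rw [hcomp, hindY, ← ENNReal.ofReal_mul (by linarith), ← ENNReal.ofReal_add (by linarith)
      (by nlinarith)]
    congr 1
    ring
  · exact (disjoint_compl_left).mono_right Set.inter_subset_left
  · exact hinit_ms.inter (by rw [hYU]; exact hVmeas.compl)
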